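/- Suppose F : ℝ → ℝ is C² with F''(s) + a(x) ≥ C₀ for all s ∈ ℝ and a.e. x ∈ 𝒪, where a ∈ L^∞(𝒪) satisfies a(x) ≥ C₀ + α a.e., and F = Ψ - (γ/2)(·)² with Ψ strongly convex of modulus γ - α > 0. Then there exists a choice of γ > α such that for all λ ∈ (0,1], the Yosida-regularized potential satisfies F''_λ(s) + a(x) = Ψ''_λ(s) - γ + a(x) ≥ C₀/2 for all s ∈ ℝ and a.e. x ∈ 𝒪, using the bound Ψ''_λ ≥ (γ-α)/(1+γ-α) and that x ↦ x²/(1+x) → 0 as x → 0⁺. -/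
import Mathlib

open MeasureTheory

/-- If `F ∈ C²(ℝ)` satisfies `F''(s) + a(x) ≥ C₀` with `a ≥ C₀ + α` a.e.,
where `α ≥ 0`, then there exists `γ > α` such that for all `λ ∈ (0,1]` the Yosida
regularization satisfies `F''_λ(s) + a(x) = Ψ''_λ(s) - γ + a(x) ≥ C₀/2` for all `s` and
a.e. `x`, using the lower bound `Ψ''_λ ≥ (γ-α)/(1+γ-α)`. Here `Q γ λ s` stands for
`Ψ''_λ(s)` (the second derivative of the Yosida approximation of `Ψ = F + (γ/2)(·)²`),
of which only the quoted lower bound is used. -/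
theorem stmt_5 {d : ℕ} (O : Set (Fin d → ℝ)) (hO : MeasurableSet O)
    (a : (Fin d → ℝ) → ℝ) (haBdd : ∃ M, ∀ᵐ x ∂(volume.restrict O), |a x| ≤ M)
    (F : ℝ → ℝ) (hF : ContDiff ℝ 2 F)
    (C₀ α : ℝ) (hC₀ : 0 < C₀) (hα : 0 ≤ α)
    (hFa : ∀ s : ℝ, ∀ᵐ x ∂(volume.restrict O), iteratedDeriv 2 F s + a x ≥ C₀)
    (ha : ∀ᵐ x ∂(volume.restrict O), C₀ + α ≤ a x)
    (Q : ℝ → ℝ → ℝ → ℝ)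
    (hQ : ∀ γ : ℝ, α < γ → ∀ lam ∈ Set.Ioc (0:ℝ) 1, ∀ s : ℝ,
      Q γ lam s ≥ (γ - α) / (1 + (γ - α))) :
    ∃ γ : ℝ, α < γ ∧ ∀ lam ∈ Set.Ioc (0:ℝ) 1, ∀ s : ℝ,
      ∀ᵐ x ∂(volume.restrict O), Q γ lam s - γ + a x ≥ C₀ / 2 := by
  set ε := min 1 (C₀ / 2) with hε
  have hεpos : 0 < ε := lt_min one_pos (by linarith)
  have hε1 : ε ≤ 1 := min_le_left _ _
  have hεC : ε ≤ C₀ / 2 := min_le_right _ _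
  refine ⟨α + ε, by linarith, fun lam hlam s => ?_⟩
  have hQb := hQ (α + ε) (by linarith) lam hlam s
  filter_upwards [ha] with x hx
  have hsimp : (α + ε - α) = ε := by ring
  rw [hsimp] at hQb
  have h1 : (0:ℝ) < 1 + ε := by linarith
  have key : ε / (1 + ε) ≥ ε - C₀ / 2 := by
    rw [ge_iff_le, ← sub_nonneg]
    have : ε / (1 + ε) - (ε - C₀ / 2) = (C₀ / 2 * (1 + ε) - ε ^ 2) / (1 + ε) := by
      field_simp; ring
    rw [this]
    apply div_nonneg _ h1.le
    nlinarith
  linarith
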